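/- Let P ⊆ ℝ², and let c, c' : Fin k → ℤ² be valid integer configurations of k axis-aligned 8×8 squares in P such that for some set T ⊆ Fin k, c'(i) = c(i) + (1,0) for i ∈ T and c'(i) = c(i) for i ∉ T. Enumerate T = {i₁, …, i_m} so that the x-coordinates satisfy c(i₁)₁ ≥ c(i₂)₁ ≥ … ≥ c(i_m)₁. Then for every 0 ≤ j ≤ m, the integer configuration placing squares i₁, …, i_j at their c'-positions and all other squares at their c-positions is valid in P. (Thus a group of squares moving simultaneously one unit to the right can be moved one by one, in order of non-increasing x-coordinates.) -/

import Mathlib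

/-- The axis-aligned `8 × 8` square with lower-left corner at the integer point `a`. -/
def sqZ (a : ℤ × ℤ) : Set (ℝ × ℝ) :=
  Set.Icc (a.1 : ℝ) ((a.1 : ℝ) + 8) ×ˢ Set.Icc (a.2 : ℝ) ((a.2 : ℝ) + 8)

/-- An integer configuration of `k` axis-aligned `8 × 8` squares is valid in `P`
if all squares are contained in `P` and have pairwise disjoint interiors. -/
def ValidZ {k : ℕ} (P : Set (ℝ × ℝ)) (c : Fin k → ℤ × ℤ) : Prop :=
  (∀ i, sqZ (c i) ⊆ P) ∧
    ∀ i j, i ≠ j → interior (sqZ (c i)) ∩ interior (sqZ (c j)) = ∅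

lemma interior_sqZ (a : ℤ × ℤ) :
    interior (sqZ a) = Set.Ioo (a.1 : ℝ) ((a.1 : ℝ) + 8) ×ˢ Set.Ioo (a.2 : ℝ) ((a.2 : ℝ) + 8) := by
  rw [sqZ, interior_prod_eq, interior_Icc, interior_Icc]

lemma sq_disj_iff (a b : ℤ × ℤ) :
    interior (sqZ a) ∩ interior (sqZ b) = ∅ ↔ 8 ≤ |a.1 - b.1| ∨ 8 ≤ |a.2 - b.2| := by
  rw [interior_sqZ, interior_sqZ]
  constructor
  · intro h
    by_contra hcon
    push_neg at hcon
    obtain ⟨h1, h2⟩ := hcon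
    rw [abs_lt] at h1 h2
    have hb1 : (b.1 : ℝ) ≤ (max a.1 b.1 : ℤ) := by exact_mod_cast le_max_right a.1 b.1
    have hmem : (((max a.1 b.1 : ℤ) : ℝ) + 1/2, ((max a.2 b.2 : ℤ) : ℝ) + 1/2) ∈
        (Set.Ioo (a.1 : ℝ) ((a.1 : ℝ) + 8) ×ˢ Set.Ioo (a.2 : ℝ) ((a.2 : ℝ) + 8)) ∩
        (Set.Ioo (b.1 : ℝ) ((b.1 : ℝ) + 8) ×ˢ Set.Ioo (b.2 : ℝ) ((b.2 : ℝ) + 8)) := by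
      have m1 : max a.1 b.1 ≤ a.1 + 7 := by omega
      have m1' : max a.1 b.1 ≤ b.1 + 7 := by omega
      have m2 : max a.2 b.2 ≤ a.2 + 7 := by omega
      have m2' : max a.2 b.2 ≤ b.2 + 7 := by omega
      constructor <;> constructor <;> constructor <;>
        · simp only []
          push_cast
          first
          | (have := le_max_left a.1 b.1; have : (a.1:ℝ) ≤ max (a.1:ℝ) (b.1:ℝ) := le_max_left _ _
             have e1 := Int.cast_max (R := ℝ) (a := a.1) (b := b.1)
             have e2 := Int.cast_max (R := ℝ) (a := a.2) (b := b.2)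
             have n1 : ((max a.1 b.1 : ℤ) : ℝ) ≤ (a.1:ℝ) + 7 := by exact_mod_cast m1
             have n1' : ((max a.1 b.1 : ℤ) : ℝ) ≤ (b.1:ℝ) + 7 := by exact_mod_cast m1'
             have n2 : ((max a.2 b.2 : ℤ) : ℝ) ≤ (a.2:ℝ) + 7 := by exact_mod_cast m2
             have n2' : ((max a.2 b.2 : ℤ) : ℝ) ≤ (b.2:ℝ) + 7 := by exact_mod_cast m2'
             nlinarith [le_max_left (a.1:ℝ) (b.1:ℝ), le_max_right (a.1:ℝ) (b.1:ℝ),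
               le_max_left (a.2:ℝ) (b.2:ℝ), le_max_right (a.2:ℝ) (b.2:ℝ),
               (by exact_mod_cast m1 : (max a.1 b.1 : ℝ) ≤ (a.1:ℝ) + 7),
               (by exact_mod_cast m1' : (max a.1 b.1 : ℝ) ≤ (b.1:ℝ) + 7),
               (by exact_mod_cast m2 : (max a.2 b.2 : ℝ) ≤ (a.2:ℝ) + 7),
               (by exact_mod_cast m2' : (max a.2 b.2 : ℝ) ≤ (b.2:ℝ) + 7)])
    rw [h] at hmem
    exact hmem
  · rintro (h | h) <;>
    · rw [Set.eq_empty_iff_forall_notMem]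
      rintro ⟨x, y⟩ ⟨⟨⟨ha1, ha2⟩, ⟨ha3, ha4⟩⟩, ⟨⟨hb1, hb2⟩, ⟨hb3, hb4⟩⟩⟩
      rcases abs_cases (a.1 - b.1) with ⟨e1, _⟩ | ⟨e1, _⟩ <;>
        rcases abs_cases (a.2 - b.2) with ⟨e2, _⟩ | ⟨e2, _⟩ <;>
        · simp only [e1, e2] at h
          have : ((a.1 : ℝ) - b.1 < 8 ∧ (b.1:ℝ) - a.1 < 8) ∧
              ((a.2 : ℝ) - b.2 < 8 ∧ (b.2:ℝ) - a.2 < 8) := by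
            constructor <;> constructor <;> linarith
          obtain ⟨⟨p1, p2⟩, ⟨p3, p4⟩⟩ := this
          have q1 : a.1 - b.1 < 8 := by exact_mod_cast p1
          have q2 : b.1 - a.1 < 8 := by exact_mod_cast p2
          have q3 : a.2 - b.2 < 8 := by exact_mod_cast p3
          have q4 : b.2 - a.2 < 8 := by exact_mod_cast p4
          omega

lemma key (a b : ℤ × ℤ) (hab : interior (sqZ a) ∩ interior (sqZ b) = ∅) (hx : b.1 ≤ a.1) :
    interior (sqZ (a + ((1, 0) : ℤ × ℤ))) ∩ interior (sqZ b) = ∅ := by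
  rw [sq_disj_iff] at hab ⊢
  simp only [Prod.fst_add, Prod.snd_add] at *
  rcases hab with h | h
  · left
    rcases abs_cases (a.1 - b.1) with ⟨e, _⟩ | ⟨e, _⟩ <;>
      rcases abs_cases (a.1 + 1 - b.1) with ⟨e', _⟩ | ⟨e', _⟩ <;> omega
  · right; simpa using h

open Classical in
theorem stmt_8 (P : Set (ℝ × ℝ)) (k : ℕ) (c c' : Fin k → ℤ × ℤ)
    (hc : ValidZ P c) (hc' : ValidZ P c') (T : Set (Fin k))
    (hmove : ∀ i ∈ T, c' i = c i + ((1, 0) : ℤ × ℤ))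
    (hfix : ∀ i ∉ T, c' i = c i)
    (m : ℕ) (e : Fin m → Fin k) (hinj : Function.Injective e)
    (hrange : ∀ i : Fin k, i ∈ T ↔ ∃ l : Fin m, e l = i)
    (hsort : ∀ l l' : Fin m, l ≤ l' → (c (e l')).1 ≤ (c (e l)).1) :
    ∀ j : ℕ, j ≤ m →
      ValidZ P (fun i => if ∃ l : Fin m, (l : ℕ) < j ∧ e l = i then c' i else c i) := by
  intro j hj
  constructor
  · intro i
    by_cases h : ∃ l : Fin m, (l : ℕ) < j ∧ e l = i
    · simpa [h] using hc'.1 i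
    · simpa [h] using hc.1 i
  · intro i i' hne
    by_cases hi : ∃ l : Fin m, (l : ℕ) < j ∧ e l = i <;>
      by_cases hi' : ∃ l : Fin m, (l : ℕ) < j ∧ e l = i'
    · simpa [hi, hi'] using hc'.2 i i' hne
    · simp only [hi, hi', if_true, if_false]
      obtain ⟨l, hl, hel⟩ := hi
      have hiT : i ∈ T := (hrange i).2 ⟨l, hel⟩
      rw [hmove i hiT]
      by_cases hT : i' ∈ T
      · obtain ⟨l', hel'⟩ := (hrange i').1 hT
        have hll' : l ≤ l' := by
          by_contra hlt
          exact hi' ⟨l', by omega, hel'⟩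
        have hx : (c i').1 ≤ (c i).1 := by
          have := hsort l l' hll'
          rwa [hel, hel'] at this
        exact key (c i) (c i') (hc.2 i i' hne) hx
      · have : c' i' = c i' := hfix i' hT
        rw [← this, ← hmove i hiT]
        exact hc'.2 i i' hne
    · simp only [hi, hi', if_true, if_false]
      obtain ⟨l', hl', hel'⟩ := hi'
      have hiT : i' ∈ T := (hrange i').2 ⟨l', hel'⟩
      rw [hmove i' hiT, Set.inter_comm]
      by_cases hT : i ∈ T
      · obtain ⟨l, hel⟩ := (hrange i).1 hT
        have hll' : l' ≤ l := by
          by_contra hlt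
          exact hi ⟨l, by omega, hel⟩
        have hx : (c i).1 ≤ (c i').1 := by
          have := hsort l' l hll'
          rwa [hel, hel'] at this
        exact key (c i') (c i) (hc.2 i' i hne.symm) hx
      · have : c' i = c i := hfix i hT
        rw [← this, ← hmove i' hiT, Set.inter_comm]
        exact hc'.2 i i' hne
    · simpa [hi, hi'] using hc.2 i i' hne
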